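/- Let C be an n×n complex matrix with ‖C‖ ≤ 1, set D = I − C*C, let d = rank D and let B be a d×n matrix with B*B = D. For j ≥ 1 let T_j be the (jd+n)×(jd+n) block matrix whose (i, i+1) block is I_d for 1 ≤ i ≤ j−1, whose (j, j+1) block is B, whose (j+1, j+1) block is C, and whose other blocks are zero. Then the following are equivalent: (i) for every j ≥ 1, the characteristic polynomial of H_{T_j}(θ) = (1/2)(e^{−iθ}T_j + e^{iθ}T_j*) is independent of θ ∈ ℝ; (ii) for every τ ∈ ℝ, the characteristic polynomial of H_C(θ) + τD = (1/2)(e^{−iθ}C + e^{iθ}C*) + τ(I − C*C) is independent of θ ∈ ℝ. -/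

import Mathlib

open Matrix Complex

/-- The `j`-th level of the partial isometry tower of the contraction `C`,
built from a `d × n` matrix `B` with `Bᴴ * B = 1 - Cᴴ * C`. -/
noncomputable def tower (n d : ℕ) (B : Matrix (Fin d) (Fin n) ℂ)
    (C : Matrix (Fin n) (Fin n) ℂ) (j : ℕ) :
    Matrix ((Fin j × Fin d) ⊕ Fin n) ((Fin j × Fin d) ⊕ Fin n) ℂ :=
  fun p q =>
    match p, q with
    | Sum.inl (i, a), Sum.inl (i', a') =>
        if (i' : ℕ) = (i : ℕ) + 1 ∧ a' = a then 1 else 0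
    | Sum.inl (i, a), Sum.inr b => if (i : ℕ) = j - 1 then B a b else 0
    | Sum.inr _, Sum.inl _ => 0
    | Sum.inr b, Sum.inr b' => C b b'

/-- `H_M(θ) = (1/2)(e^{-iθ} M + e^{iθ} Mᴴ)`. -/
noncomputable def Hmat {ι : Type*} [Fintype ι] [DecidableEq ι]
    (M : Matrix ι ι ℂ) (θ : ℝ) : Matrix ι ι ℂ :=
  (1 / 2 : ℂ) • (Complex.exp (-(θ : ℂ) * Complex.I) • M
    + Complex.exp ((θ : ℂ) * Complex.I) • Mᴴ)

/-! ### The continued-fraction sequence and the auxiliary polynomials -/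

noncomputable def gseq (lam γ : ℂ) : ℕ → ℂ
  | 0 => lam - γ
  | i + 1 => lam - 1 / (4 * gseq lam γ i)

lemma gseq_shift (lam γ : ℂ) (i : ℕ) :
    gseq lam (1 / (4 * (lam - γ))) i = gseq lam γ (i + 1) := by
  induction i with
  | zero => simp [gseq]
  | succ i ih => simp only [gseq, ih]

noncomputable def Ppoly : ℕ → Polynomial ℂ
  | 0 => 1
  | 1 => Polynomial.X
  | (i + 2) => Polynomial.X * Ppoly (i + 1) - Polynomial.C (1 / 4) * Ppoly i

lemma Ppoly_monic_natDegree : ∀ i, (Ppoly i).Monic ∧ (Ppoly i).natDegree = i := by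
  have H : ∀ i, ((Ppoly i).Monic ∧ (Ppoly i).natDegree = i) ∧
      ((Ppoly (i+1)).Monic ∧ (Ppoly (i+1)).natDegree = i+1) := by
    intro i
    induction i with
    | zero => constructor <;> simp [Ppoly, Polynomial.monic_X]
    | succ i ih =>
      obtain ⟨⟨h0m, h0d⟩, ⟨h1m, h1d⟩⟩ := ih
      refine ⟨⟨h1m, h1d⟩, ?_⟩
      have hm : (Polynomial.X * Ppoly (i+1)).Monic := (Polynomial.monic_X).mul h1m
      have hdeg : (Polynomial.X * Ppoly (i+1)).natDegree = i + 2 := by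
        rw [Polynomial.natDegree_mul Polynomial.X_ne_zero h1m.ne_zero,
          Polynomial.natDegree_X, h1d]
        omega
      have hlt : (-(Polynomial.C (1/4 : ℂ) * Ppoly i)).degree <
          (Polynomial.X * Ppoly (i+1)).degree := by
        apply Polynomial.degree_lt_degree
        rw [Polynomial.natDegree_neg, hdeg]
        calc (Polynomial.C (1/4 : ℂ) * Ppoly i).natDegree
            ≤ (Polynomial.C (1/4 : ℂ)).natDegree + (Ppoly i).natDegree :=
              Polynomial.natDegree_mul_le
          _ < i + 2 := by rw [Polynomial.natDegree_C, h0d]; omega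
      have hP2 : Ppoly (i + 2) = Polynomial.X * Ppoly (i+1) - Polynomial.C (1/4) * Ppoly i := rfl
      constructor
      · rw [hP2, sub_eq_add_neg]
        exact hm.add_of_left hlt
      · rw [hP2, sub_eq_add_neg,
          Polynomial.natDegree_eq_of_degree_eq (Polynomial.degree_add_eq_left_of_degree_lt hlt),
          hdeg]
  exact fun i => (H i).1

lemma Ppoly_ne_zero (i : ℕ) : Ppoly i ≠ 0 := (Ppoly_monic_natDegree i).1.ne_zero

lemma gseq_eq_P (lam : ℂ) :
    ∀ i, (∀ k ≤ i, (Ppoly (k + 1)).eval lam ≠ 0) →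
      gseq lam 0 i = (Ppoly (i + 1)).eval lam / (Ppoly i).eval lam := by
  intro i
  induction i with
  | zero => intro _; simp [gseq, Ppoly]
  | succ i ih =>
    intro h
    have hP1 : (Ppoly (i+1)).eval lam ≠ 0 := h i (by omega)
    have hP0 : (Ppoly i).eval lam ≠ 0 := by
      cases i with
      | zero => simp [Ppoly]
      | succ k => exact h k (by omega)
    have hrec : gseq lam 0 i = (Ppoly (i + 1)).eval lam / (Ppoly i).eval lam :=
      ih (fun k hk => h k (by omega))
    have hP2 : Ppoly (i + 2) = Polynomial.X * Ppoly (i+1) - Polynomial.C (1/4) * Ppoly i := rfl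
    show lam - 1 / (4 * gseq lam 0 i) = _
    rw [hrec, hP2]
    simp only [Polynomial.eval_sub, Polynomial.eval_mul, Polynomial.eval_X, Polynomial.eval_C]
    field_simp

/-! ### Trigonometric values of the continued fraction -/

noncomputable def phi (m : ℕ) : ℝ := 1 / (m + 1)

lemma phi_pos (m : ℕ) : 0 < phi m := by unfold phi; positivity

lemma sin_int_phi_ne (m : ℕ) (c : ℤ) (hc : c ≠ 0) : Real.sin ((c : ℝ) * phi m) ≠ 0 := by
  intro h
  obtain ⟨k, hk⟩ := Real.sin_eq_zero_iff.mp h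
  have hm1 : ((m : ℝ) + 1) ≠ 0 := by positivity
  rcases eq_or_ne k 0 with rfl | hk0
  · rw [Int.cast_zero, zero_mul] at hk
    have h2 : (c : ℝ) = 0 := by
      have h3 := hk.symm
      rw [phi] at h3
      field_simp at h3
      exact_mod_cast h3
    exact hc (by exact_mod_cast h2)
  · have hpi : Real.pi = ((c : ℤ) : ℝ) / (((k * (m + 1) : ℤ)) : ℝ) := by
      rw [phi] at hk
      have hk0' : ((k : ℝ)) ≠ 0 := Int.cast_ne_zero.mpr hk0
      push_cast
      field_simp
      field_simp at hk
      linarith [hk]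
    exact (irrational_iff_ne_rational Real.pi).mp irrational_pi c (k * (m + 1)) (mul_ne_zero hk0 (by omega)) hpi

lemma sin_nat_phi_ne (m k : ℕ) (hk : 1 ≤ k) : Real.sin ((k : ℝ) * phi m) ≠ 0 := by
  have h := sin_int_phi_ne m k (Int.natCast_ne_zero.mpr (by omega))
  exact_mod_cast h

lemma sin_phi_ne (m : ℕ) : Real.sin (phi m) ≠ 0 := by
  have := sin_nat_phi_ne m 1 le_rfl
  simpa using this

lemma gseq_trig (m : ℕ) : ∀ i : ℕ,
    gseq ((Real.cos (phi m) : ℝ) : ℂ) 0 i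
      = ((Real.sin (((i : ℝ) + 2) * phi m) / (2 * Real.sin (((i : ℝ) + 1) * phi m)) : ℝ) : ℂ) := by
  set φ := phi m with hφ
  intro i
  induction i with
  | zero =>
    have hreal : Real.cos φ
        = Real.sin (((0 : ℝ) + 2) * φ) / (2 * Real.sin (((0 : ℝ) + 1) * φ)) := by
      rw [show ((0:ℝ) + 2) * φ = 2 * φ by ring, show ((0:ℝ) + 1) * φ = φ by ring,
        Real.sin_two_mul]
      field_simp [sin_phi_ne m]
      exact (mul_div_cancel_right₀ _ (sin_phi_ne m)).symm
    show ((Real.cos φ : ℝ) : ℂ) - 0 = _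
    rw [sub_zero, hreal]
    norm_num
  | succ i ih =>
    have hs1 : Real.sin (((i : ℝ) + 1) * φ) ≠ 0 := by
      have h := sin_nat_phi_ne m (i + 1) (by omega)
      rwa [show (((i + 1 : ℕ)) : ℝ) = (i : ℝ) + 1 by push_cast; ring] at h
    have hs2 : Real.sin (((i : ℝ) + 2) * φ) ≠ 0 := by
      have h := sin_nat_phi_ne m (i + 2) (by omega)
      rwa [show (((i + 2 : ℕ)) : ℝ) = (i : ℝ) + 2 by push_cast; ring] at h
    have key : Real.sin (((i : ℝ) + 3) * φ)
        = 2 * Real.cos φ * Real.sin (((i : ℝ) + 2) * φ) - Real.sin (((i : ℝ) + 1) * φ) := by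
      have e1 := Real.sin_add (((i : ℝ) + 2) * φ) φ
      have e2 := Real.sin_sub (((i : ℝ) + 2) * φ) φ
      rw [show ((i : ℝ) + 2) * φ + φ = ((i : ℝ) + 3) * φ by ring] at e1
      rw [show ((i : ℝ) + 2) * φ - φ = ((i : ℝ) + 1) * φ by ring] at e2
      linarith
    have hreal : Real.cos φ
          - 1 / (4 * (Real.sin (((i : ℝ) + 2) * φ) / (2 * Real.sin (((i : ℝ) + 1) * φ))))
        = Real.sin (((i : ℝ) + 3) * φ) / (2 * Real.sin (((i : ℝ) + 2) * φ)) := by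
      rw [key]
      field_simp
      ring
    show ((Real.cos φ : ℝ) : ℂ) - 1 / (4 * gseq _ 0 i) = _
    rw [ih,
      show ((((i : ℕ) + 1 : ℕ) : ℝ) + 2) = (i : ℝ) + 3 by push_cast; ring,
      show ((((i : ℕ) + 1 : ℕ) : ℝ) + 1) = (i : ℝ) + 2 by push_cast; ring,
      ← hreal]
    rw [Complex.ofReal_sub, Complex.ofReal_div, Complex.ofReal_mul, Complex.ofReal_div]
    norm_num

lemma tval_injective (m : ℕ) : Function.Injective
    (fun i : ℕ => Real.sin (((i : ℝ) + 1) * phi m) / (2 * Real.sin (((i : ℝ) + 2) * phi m))) := by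
  set φ := phi m with hφ
  intro i i' h
  by_contra hne
  simp only at h
  have hs2 : Real.sin (((i : ℝ) + 2) * φ) ≠ 0 := by
    have hh := sin_nat_phi_ne m (i + 2) (by omega)
    rwa [show (((i + 2 : ℕ)) : ℝ) = (i : ℝ) + 2 by push_cast; ring] at hh
  have hs2' : Real.sin (((i' : ℝ) + 2) * φ) ≠ 0 := by
    have hh := sin_nat_phi_ne m (i' + 2) (by omega)
    rwa [show (((i' + 2 : ℕ)) : ℝ) = (i' : ℝ) + 2 by push_cast; ring] at hh
  have hcross : Real.sin (((i : ℝ) + 1) * φ) * Real.sin (((i' : ℝ) + 2) * φ)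
      = Real.sin (((i' : ℝ) + 1) * φ) * Real.sin (((i : ℝ) + 2) * φ) := by
    rw [div_eq_div_iff (mul_ne_zero two_ne_zero hs2) (mul_ne_zero two_ne_zero hs2')] at h
    linarith
  have key : Real.cos (((i : ℝ) + 1) * φ - ((i' : ℝ) + 2) * φ)
      = Real.cos (((i' : ℝ) + 1) * φ - ((i : ℝ) + 2) * φ) := by
    have e1 := Real.cos_sub (((i : ℝ) + 1) * φ) (((i' : ℝ) + 2) * φ)
    have e2 := Real.cos_add (((i : ℝ) + 1) * φ) (((i' : ℝ) + 2) * φ)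
    have e3 := Real.cos_sub (((i' : ℝ) + 1) * φ) (((i : ℝ) + 2) * φ)
    have e4 := Real.cos_add (((i' : ℝ) + 1) * φ) (((i : ℝ) + 2) * φ)
    have hsum : Real.cos (((i : ℝ) + 1) * φ + ((i' : ℝ) + 2) * φ)
        = Real.cos (((i' : ℝ) + 1) * φ + ((i : ℝ) + 2) * φ) := by
      rw [show ((i : ℝ) + 1) * φ + ((i' : ℝ) + 2) * φ = ((i' : ℝ) + 1) * φ + ((i : ℝ) + 2) * φ
        by ring]
    linarith
  have e5 := Real.cos_sub_cos (((i : ℝ) + 1) * φ - ((i' : ℝ) + 2) * φ)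
    (((i' : ℝ) + 1) * φ - ((i : ℝ) + 2) * φ)
  rw [key, sub_self] at e5
  rw [show ((((i : ℝ) + 1) * φ - ((i' : ℝ) + 2) * φ) + (((i' : ℝ) + 1) * φ - ((i : ℝ) + 2) * φ)) / 2
      = -φ by ring,
    show ((((i : ℝ) + 1) * φ - ((i' : ℝ) + 2) * φ) - (((i' : ℝ) + 1) * φ - ((i : ℝ) + 2) * φ)) / 2
      = ((i : ℝ) - (i' : ℝ)) * φ by ring, Real.sin_neg] at e5
  have hzero : Real.sin (((i : ℝ) - (i' : ℝ)) * φ) = 0 := by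
    rcases mul_eq_zero.mp e5.symm with h1 | h1
    · rcases mul_eq_zero.mp h1 with h2 | h2
      · norm_num at h2
      · exact absurd (neg_eq_zero.mp h2) (sin_phi_ne m)
    · exact h1
  have hz2 : Real.sin ((((i : ℤ) - (i' : ℤ) : ℤ) : ℝ) * φ) = 0 := by
    rwa [show (((i : ℤ) - (i' : ℤ) : ℤ) : ℝ) = (i : ℝ) - (i' : ℝ) by push_cast; ring]
  exact sin_int_phi_ne m ((i : ℤ) - (i' : ℤ))
    (sub_ne_zero.mpr (by exact_mod_cast hne)) hz2

/-! ### Block matrices and the determinant bridge -/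

def firstE (j d n : ℕ) :
    Matrix ((Fin j × Fin d) ⊕ Fin n) ((Fin j × Fin d) ⊕ Fin n) ℂ :=
  fun p q =>
    match p, q with
    | Sum.inl (i, a), Sum.inl (i', a') =>
        if (i : ℕ) = 0 ∧ (i' : ℕ) = 0 ∧ a' = a then 1 else 0
    | _, _ => 0

noncomputable def Mmat (n d : ℕ) (B : Matrix (Fin d) (Fin n) ℂ)
    (C : Matrix (Fin n) (Fin n) ℂ) (j : ℕ) (z w lam γ : ℂ) :
    Matrix ((Fin j × Fin d) ⊕ Fin n) ((Fin j × Fin d) ⊕ Fin n) ℂ :=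
  lam • 1 - (z • tower n d B C j + w • (tower n d B C j)ᴴ) - γ • firstE j d n

lemma det_fromBlocks_smul_one {m p : Type*} [Fintype m] [DecidableEq m]
    [Fintype p] [DecidableEq p] (c : ℂ) (hc : c ≠ 0)
    (Y : Matrix m p ℂ) (Z : Matrix p m ℂ) (W : Matrix p p ℂ) :
    (fromBlocks (c • (1 : Matrix m m ℂ)) Y Z W).det
      = c ^ (Fintype.card m) * (W - c⁻¹ • (Z * Y)).det := by
  have hdet : IsUnit (c • (1 : Matrix m m ℂ)).det := by
    simp [det_smul, isUnit_iff_ne_zero, pow_ne_zero, hc]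
  haveI := (c • (1 : Matrix m m ℂ)).invertibleOfIsUnitDet hdet
  have hinv : (c • (1 : Matrix m m ℂ))⁻¹ = c⁻¹ • (1 : Matrix m m ℂ) := by
    apply inv_eq_right_inv
    rw [smul_mul_assoc, one_mul, smul_smul, mul_inv_cancel₀ hc, one_smul]
  rw [Matrix.det_fromBlocks₁₁, Matrix.invOf_eq_nonsing_inv, hinv]
  congr 1
  · simp [det_smul]
  · congr 1
    rw [Matrix.mul_smul, Matrix.mul_one, Matrix.smul_mul]

def e1equiv (d n : ℕ) : (Fin d ⊕ Fin n) ≃ ((Fin 1 × Fin d) ⊕ Fin n) where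
  toFun := fun u => match u with
    | Sum.inl a => Sum.inl (0, a)
    | Sum.inr b => Sum.inr b
  invFun := fun p => match p with
    | Sum.inl (_, a) => Sum.inl a
    | Sum.inr b => Sum.inr b
  left_inv := by rintro (a | b) <;> rfl
  right_inv := by
    rintro (⟨i, a⟩ | b)
    · induction i using Fin.cases with
      | zero => rfl
      | succ i' => exact i'.elim0
    · rfl

def e2equiv (j d n : ℕ) : (Fin d ⊕ ((Fin j × Fin d) ⊕ Fin n)) ≃ ((Fin (j + 1) × Fin d) ⊕ Fin n) where
  toFun := fun u => match u with
    | Sum.inl a => Sum.inl (0, a)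
    | Sum.inr (Sum.inl (i, a)) => Sum.inl (i.succ, a)
    | Sum.inr (Sum.inr b) => Sum.inr b
  invFun := fun p => match p with
    | Sum.inl (i, a) => Fin.cases (Sum.inl a) (fun i' => Sum.inr (Sum.inl (i', a))) i
    | Sum.inr b => Sum.inr (Sum.inr b)
  left_inv := by rintro (a | (⟨i, a⟩ | b)) <;> simp
  right_inv := by
    rintro (⟨i, a⟩ | b)
    · induction i using Fin.cases <;> simp
    · rfl

noncomputable def Ymat (n d j : ℕ) (z : ℂ) : Matrix (Fin d) ((Fin j × Fin d) ⊕ Fin n) ℂ :=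
  fun a q => match q with
    | Sum.inl (i, a') => if (i : ℕ) = 0 ∧ a' = a then -z else 0
    | Sum.inr _ => 0

noncomputable def Zmat (n d j : ℕ) (w : ℂ) : Matrix ((Fin j × Fin d) ⊕ Fin n) (Fin d) ℂ :=
  fun q a => match q with
    | Sum.inl (i, a') => if (i : ℕ) = 0 ∧ a' = a then -w else 0
    | Sum.inr _ => 0

lemma baseBlocks (n d : ℕ) (B : Matrix (Fin d) (Fin n) ℂ) (C : Matrix (Fin n) (Fin n) ℂ)
    (z w lam γ : ℂ) :
    (Mmat n d B C 1 z w lam γ).submatrix (e1equiv d n) (e1equiv d n)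
      = fromBlocks ((lam - γ) • (1 : Matrix (Fin d) (Fin d) ℂ)) (-(z • B)) (-(w • Bᴴ))
          (lam • 1 - (z • C + w • Cᴴ)) := by
  ext u v
  rcases u with a | b <;> rcases v with a' | b' <;>
    simp [Mmat, tower, firstE, e1equiv, Matrix.one_apply, fromBlocks,
      Matrix.conjTranspose_apply, Matrix.smul_apply, Matrix.sub_apply, Matrix.add_apply,
      Prod.ext_iff, and_comm, eq_comm, mul_comm]
  split <;> simp

lemma stepBlocks (n d j : ℕ) (hj : 1 ≤ j) (B : Matrix (Fin d) (Fin n) ℂ)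
    (C : Matrix (Fin n) (Fin n) ℂ) (z w lam γ : ℂ) :
    (Mmat n d B C (j + 1) z w lam γ).submatrix (e2equiv j d n) (e2equiv j d n)
      = fromBlocks ((lam - γ) • (1 : Matrix (Fin d) (Fin d) ℂ)) (Ymat n d j z) (Zmat n d j w)
          (Mmat n d B C j z w lam 0) := by
  have h0j : ¬ ((0 : ℕ) = j) := by omega
  ext u v
  rcases u with a | (⟨i, a⟩ | b) <;> rcases v with a' | (⟨i', a'⟩ | b') <;>
    simp [Mmat, tower, firstE, e2equiv, Ymat, Zmat, Matrix.one_apply, fromBlocks,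
      Matrix.conjTranspose_apply, Matrix.smul_apply, Matrix.sub_apply, Matrix.add_apply,
      Prod.ext_iff, Fin.val_succ, Fin.succ_ne_zero, h0j, Fin.succ_inj]
  · by_cases h : a = a'
    · simp [h]
    · simp [h, Ne.symm h]
  · rw [if_neg (fun hc => (Fin.succ_ne_zero i') hc.1.symm)]
    split <;> simp
  · split <;> simp
  · simp only [show ((i : ℕ) + 1 = j) ↔ ((i : ℕ) = j - 1) from by omega]
  · exact Or.inl (by simp only [show ((i' : ℕ) + 1 = j) ↔ ((i' : ℕ) = j - 1) from by omega])

lemma ZY_eq (n d j : ℕ) (z w : ℂ) :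
    Zmat n d j w * Ymat n d j z = (w * z) • firstE j d n := by
  ext p q
  rcases p with ⟨i, c⟩ | b <;> rcases q with ⟨i', c'⟩ | b' <;>
    simp [Matrix.mul_apply, Zmat, Ymat, firstE, Matrix.smul_apply]
  · rcases eq_or_ne ((i : ℕ)) 0 with h1 | h1 <;>
    rcases eq_or_ne ((i' : ℕ)) 0 with h2 | h2 <;>
    rcases eq_or_ne c' c with h3 | h3 <;>
      simp [h1, h2, h3, Finset.sum_ite_eq, mul_comm]
    · exact fun h => absurd h.symm h3

lemma bridgeAux (n d : ℕ) (B : Matrix (Fin d) (Fin n) ℂ)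
    (C : Matrix (Fin n) (Fin n) ℂ) (z w : ℂ) (hzw : z * w = 1 / 4) :
    ∀ j, 1 ≤ j → ∀ lam γ : ℂ, (∀ i < j, gseq lam γ i ≠ 0) →
      (Mmat n d B C j z w lam γ).det
        = (∏ i ∈ Finset.range j, gseq lam γ i) ^ d *
          (lam • (1 : Matrix (Fin n) (Fin n) ℂ) - (z • C + w • Cᴴ)
            - (1 / (4 * gseq lam γ (j - 1))) • (Bᴴ * B)).det := by
  intro j hj
  induction j, hj using Nat.le_induction with
  | base =>
    intro lam γ hg
    have h0 : gseq lam γ 0 = lam - γ := rfl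
    have hlg : lam - γ ≠ 0 := h0 ▸ hg 0 (by omega)
    rw [← Matrix.det_submatrix_equiv_self (e1equiv d n) (Mmat n d B C 1 z w lam γ),
      baseBlocks n d B C z w lam γ, det_fromBlocks_smul_one _ hlg]
    congr 1
    · simp [Fintype.card_fin, h0]
    · congr 1
      have hZY : (-(w • Bᴴ)) * (-(z • B)) = (w * z) • (Bᴴ * B) := by
        rw [Matrix.neg_mul, Matrix.mul_neg, neg_neg, Matrix.smul_mul, Matrix.mul_smul, smul_smul]
      rw [hZY, smul_smul,
        show (lam - γ)⁻¹ * (w * z) = 1 / (4 * gseq lam γ 0) by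
          rw [mul_comm w z, hzw, h0]; field_simp]
  | succ j hj ih =>
    intro lam γ hg
    have h0 : gseq lam γ 0 = lam - γ := rfl
    have hlg : lam - γ ≠ 0 := h0 ▸ hg 0 (by omega)
    set γ' : ℂ := 1 / (4 * (lam - γ)) with hγ'
    have hshift : ∀ i, gseq lam γ' i = gseq lam γ (i + 1) := fun i => gseq_shift lam γ i
    rw [← Matrix.det_submatrix_equiv_self (e2equiv j d n) (Mmat n d B C (j+1) z w lam γ),
      stepBlocks n d j hj B C z w lam γ, det_fromBlocks_smul_one _ hlg]
    have hWZ : Mmat n d B C j z w lam 0 - (lam - γ)⁻¹ • (Zmat n d j w * Ymat n d j z)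
        = Mmat n d B C j z w lam γ' := by
      rw [ZY_eq, smul_smul,
        show (lam - γ)⁻¹ * (w * z) = γ' by rw [mul_comm w z, hzw, hγ']; field_simp]
      simp only [Mmat, zero_smul, sub_zero]
    rw [hWZ, ih lam γ' (fun i hi => (hshift i) ▸ hg (i+1) (by omega))]
    have hj1 : j - 1 + 1 = j := by omega
    have hgj : gseq lam γ' (j - 1) = gseq lam γ j := by rw [hshift, hj1]
    have hprod : (∏ i ∈ Finset.range j, gseq lam γ' i)
        = ∏ i ∈ Finset.range j, gseq lam γ (i + 1) :=
      Finset.prod_congr rfl (fun i _ => hshift i)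
    rw [hgj, hprod, Fintype.card_fin,
      show ((j + 1) - 1) = j from rfl, Finset.prod_range_succ', h0, mul_pow]
    ring

lemma Hmat_eq {ι : Type*} [Fintype ι] [DecidableEq ι] (M : Matrix ι ι ℂ) (θ : ℝ) :
    Hmat M θ = (Complex.exp (-(θ : ℂ) * Complex.I) / 2) • M
      + (Complex.exp ((θ : ℂ) * Complex.I) / 2) • Mᴴ := by
  simp only [Hmat, smul_add, smul_smul]
  ring_nf

lemma zw_quarter (θ : ℝ) :
    (Complex.exp (-(θ : ℂ) * Complex.I) / 2) * (Complex.exp ((θ : ℂ) * Complex.I) / 2)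
      = 1 / 4 := by
  rw [div_mul_div_comm, ← Complex.exp_add]
  norm_num

lemma bridge (n d : ℕ) (B : Matrix (Fin d) (Fin n) ℂ)
    (C : Matrix (Fin n) (Fin n) ℂ) (j : ℕ) (hj : 1 ≤ j) (θ : ℝ) (lam : ℂ)
    (hg : ∀ i < j, gseq lam 0 i ≠ 0) :
    (lam • 1 - Hmat (tower n d B C j) θ).det
      = (∏ i ∈ Finset.range j, gseq lam 0 i) ^ d *
        (lam • (1 : Matrix (Fin n) (Fin n) ℂ) - Hmat C θ
          - (1 / (4 * gseq lam 0 (j - 1))) • (Bᴴ * B)).det := by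
  set z := Complex.exp (-(θ : ℂ) * Complex.I) / 2 with hz
  set w := Complex.exp ((θ : ℂ) * Complex.I) / 2 with hw
  have hzw : z * w = 1 / 4 := zw_quarter θ
  have h1 : lam • 1 - Hmat (tower n d B C j) θ = Mmat n d B C j z w lam 0 := by
    rw [Mmat, Hmat_eq, ← hz, ← hw]
    simp
  have h2 : Hmat C θ = z • C + w • Cᴴ := by rw [Hmat_eq, ← hz, ← hw]
  rw [h1, bridgeAux n d B C z w hzw j hj lam 0 hg, h2]

/-! ### Polynomial plumbing -/

lemma eval_charpoly' {ι : Type*} [Fintype ι] [DecidableEq ι]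
    (M : Matrix ι ι ℂ) (x : ℂ) :
    M.charpoly.eval x = (x • (1 : Matrix ι ι ℂ) - M).det := by
  rw [Matrix.charpoly, Polynomial.eval, ← Polynomial.coe_eval₂RingHom, RingHom.map_det]
  congr 1
  ext i j
  by_cases h : i = j <;>
    simp [charmatrix_apply, h, Matrix.one_apply, Matrix.smul_apply, Polynomial.coe_eval₂RingHom]

lemma tau_poly {n : ℕ} (U V D : Matrix (Fin n) (Fin n) ℂ) (S : Set ℂ) (hS : S.Infinite)
    (h : ∀ τ ∈ S, (U - τ • D).det = (V - τ • D).det) :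
    ∀ τ : ℂ, (U - τ • D).det = (V - τ • D).det := by
  have key : ∀ (A : Matrix (Fin n) (Fin n) ℂ) (τ : ℂ),
      ((A.map Polynomial.C - (Polynomial.X : Polynomial ℂ) • D.map Polynomial.C).det).eval τ
        = (A - τ • D).det := by
    intro A τ
    rw [Polynomial.eval, ← Polynomial.coe_eval₂RingHom, RingHom.map_det]
    congr 1
    ext i j
    simp only [Polynomial.coe_eval₂RingHom, RingHom.mapMatrix_apply, Matrix.map_apply,
      Matrix.smul_apply,
      Matrix.sub_apply, map_sub, Polynomial.eval₂_C, Polynomial.eval₂_mul, Polynomial.eval₂_X,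
      smul_eq_mul, RingHom.id_apply]
  have hpq : (U.map Polynomial.C - (Polynomial.X : Polynomial ℂ) • D.map Polynomial.C).det
      = (V.map Polynomial.C - (Polynomial.X : Polynomial ℂ) • D.map Polynomial.C).det := by
    apply Polynomial.eq_of_infinite_eval_eq
    apply Set.Infinite.mono (s := S) _ hS
    rintro x hx
    simp only [Set.mem_setOf_eq, key]
    exact h x hx
  intro τ
  rw [← key U τ, ← key V τ, hpq]

theorem stmt3 (n d : ℕ) (C : Matrix (Fin n) (Fin n) ℂ)
    (hC : ‖Matrix.toEuclideanCLM (𝕜 := ℂ) C‖ ≤ 1)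
    (hd : d = (1 - Cᴴ * C).rank)
    (B : Matrix (Fin d) (Fin n) ℂ) (hB : Bᴴ * B = 1 - Cᴴ * C) :
    (∀ j : ℕ, 1 ≤ j → ∀ θ : ℝ,
        (Hmat (tower n d B C j) θ).charpoly = (Hmat (tower n d B C j) 0).charpoly) ↔
    (∀ τ : ℝ, ∀ θ : ℝ,
        (Hmat C θ + (τ : ℂ) • (1 - Cᴴ * C)).charpoly
          = (Hmat C 0 + (τ : ℂ) • (1 - Cᴴ * C)).charpoly) := by
  constructor
  · -- tower circularity implies defect-pencil circularity
    intro hI τ θ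
    apply Polynomial.eq_of_infinite_eval_eq
    apply Set.Infinite.mono
      (s := Set.range fun m : ℕ => ((Real.cos (phi m) : ℝ) : ℂ)) ?_ ?_
    swap
    · apply Set.infinite_range_of_injective
      intro m m' hmm
      have h1 : Real.cos (phi m) = Real.cos (phi m') := Complex.ofReal_injective hmm
      have hle : ∀ m'' : ℕ, phi m'' ∈ Set.Icc (0:ℝ) Real.pi := by
        intro m''
        refine ⟨(phi_pos m'').le, ?_⟩
        have h3 : phi m'' ≤ 1 := by
          unfold phi
          rw [div_le_one (by positivity)]
          push_cast; linarith [Nat.cast_nonneg (α := ℝ) m'']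
        linarith [Real.pi_gt_three]
      have h2 : phi m = phi m' := Real.injOn_cos (hle m) (hle m') h1
      unfold phi at h2
      rw [div_eq_div_iff (by positivity) (by positivity)] at h2
      exact_mod_cast (by linarith : (m:ℝ) = m')
    rintro x ⟨m, rfl⟩
    simp only [Set.mem_setOf_eq]
    rw [eval_charpoly', eval_charpoly']
    set lam : ℂ := ((Real.cos (phi m) : ℝ) : ℂ) with hlam
    have hform : ∀ θ' : ℝ,
        lam • (1 : Matrix (Fin n) (Fin n) ℂ) - (Hmat C θ' + (τ:ℂ) • (1 - Cᴴ*C))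
          = (lam • 1 - Hmat C θ') - (τ:ℂ) • (1 - Cᴴ*C) := fun θ' => by
      rw [sub_add_eq_sub_sub]
    rw [hform, hform]
    -- nonvanishing of the continued fraction at lam
    have hsin : ∀ k : ℕ, 1 ≤ k → Real.sin ((k : ℝ) * phi m) ≠ 0 := sin_nat_phi_ne m
    have hs1 : ∀ k : ℕ, Real.sin (((k : ℝ) + 1) * phi m) ≠ 0 := by
      intro k
      have h := hsin (k+1) (by omega)
      rwa [show (((k + 1 : ℕ)) : ℝ) = (k : ℝ) + 1 by push_cast; ring] at h
    have hs2 : ∀ k : ℕ, Real.sin (((k : ℝ) + 2) * phi m) ≠ 0 := by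
      intro k
      have h := hsin (k+2) (by omega)
      rwa [show (((k + 2 : ℕ)) : ℝ) = (k : ℝ) + 2 by push_cast; ring] at h
    have hg : ∀ k : ℕ, gseq lam 0 k ≠ 0 := by
      intro k
      rw [hlam, gseq_trig m k]
      simp only [ne_eq, Complex.ofReal_eq_zero]
      exact div_ne_zero (hs2 k) (by simpa using hs1 k)
    refine tau_poly _ _ _ (Set.range fun i : ℕ =>
      ((Real.sin (((i : ℝ) + 1) * phi m)
        / (2 * Real.sin (((i : ℝ) + 2) * phi m)) : ℝ) : ℂ)) ?_ ?_ ((τ : ℂ))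
    · apply Set.infinite_range_of_injective
      intro i i' h
      exact tval_injective m (Complex.ofReal_injective h)
    rintro t ⟨i, rfl⟩
    have ht : ((Real.sin (((i : ℝ) + 1) * phi m)
          / (2 * Real.sin (((i : ℝ) + 2) * phi m)) : ℝ) : ℂ)
        = 1 / (4 * gseq lam 0 i) := by
      rw [hlam, gseq_trig m i]
      rw [show (Real.sin (((i : ℝ) + 1) * phi m) / (2 * Real.sin (((i : ℝ) + 2) * phi m)))
          = 1 / (4 * (Real.sin (((i : ℝ) + 2) * phi m)
              / (2 * Real.sin (((i : ℝ) + 1) * phi m)))) from by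
        field_simp
        ring]
      push_cast
      ring
    have hbr := bridge n d B C (i+1) (by omega) θ lam (fun k _ => hg k)
    have hbr0 := bridge n d B C (i+1) (by omega) 0 lam (fun k _ => hg k)
    have hdet : (lam • 1 - Hmat (tower n d B C (i+1)) θ).det
        = (lam • 1 - Hmat (tower n d B C (i+1)) 0).det := by
      rw [← eval_charpoly', ← eval_charpoly', hI (i+1) (by omega) θ]
    rw [hbr, hbr0] at hdet
    have hpref : (∏ k ∈ Finset.range (i+1), gseq lam 0 k) ^ d ≠ 0 :=
      pow_ne_zero _ (Finset.prod_ne_zero_iff.mpr fun k _ => hg k)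
    have hcanc := mul_left_cancel₀ hpref hdet
    rw [show (i+1) - 1 = i from rfl, hB, ← ht] at hcanc
    exact hcanc
  · -- defect-pencil circularity implies tower circularity
    intro hII j hj θ
    apply Polynomial.eq_of_infinite_eval_eq
    apply Set.Infinite.mono
      (s := {lam : ℂ | ∀ i < j, (Ppoly (i+1)).eval lam ≠ 0}) ?_ ?_
    swap
    · have hEq : {lam : ℂ | ∀ i < j, (Ppoly (i+1)).eval lam ≠ 0}
          = {lam : ℂ | ∃ i, i < j ∧ (Ppoly (i+1)).eval lam = 0}ᶜ := by
        ext x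
        simp only [Set.mem_setOf_eq, Set.mem_compl_iff, not_exists, not_and]
      rw [hEq]
      apply Set.Finite.infinite_compl
      apply Set.Finite.subset
        (Set.Finite.biUnion (Finset.range j).finite_toSet
          (fun i _ => Polynomial.finite_setOf_isRoot (Ppoly_ne_zero (i+1))))
      rintro x ⟨i, hi, hx⟩
      exact Set.mem_biUnion (by simpa using hi) hx
    intro lam hlam
    simp only [Set.mem_setOf_eq] at hlam ⊢
    rw [eval_charpoly', eval_charpoly']
    have hg : ∀ i < j, gseq lam 0 i ≠ 0 := by
      intro i hi
      rw [gseq_eq_P lam i (fun k hk => hlam k (by omega))]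
      refine div_ne_zero (hlam i hi) ?_
      cases i with
      | zero => simp [Ppoly]
      | succ k => exact hlam k (by omega)
    rw [bridge n d B C j hj θ lam hg, bridge n d B C j hj 0 lam hg]
    congr 1
    have hreal : ∀ τ' : ℂ, τ' ∈ Set.range ((↑) : ℝ → ℂ) →
        ((lam • 1 - Hmat C θ) - τ' • (1 - Cᴴ*C)).det
          = ((lam • 1 - Hmat C 0) - τ' • (1 - Cᴴ*C)).det := by
      rintro t ⟨τ', rfl⟩
      have h1 := congrArg (Polynomial.eval lam) (hII τ' θ)
      rw [eval_charpoly', eval_charpoly', sub_add_eq_sub_sub, sub_add_eq_sub_sub] at h1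
      exact h1
    have hall := tau_poly (lam • 1 - Hmat C θ) (lam • 1 - Hmat C 0) (1 - Cᴴ*C)
      (Set.range ((↑) : ℝ → ℂ))
      (Set.infinite_range_of_injective Complex.ofReal_injective) hreal
      (1 / (4 * gseq lam 0 (j-1)))
    rw [hB]
    exact hall
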